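/- For the hypercube graph Q_m on 2^m vertices, the minimum membership dimension of a good system of categories equals m. -/

import Mathlib

open Finset SimpleGraph

variable {V : Type*}

def catDist [DecidableEq V] (S : Finset (Finset V)) (s t : V) : ℕ :=
  (S.filter fun C => t ∈ C ∧ s ∉ C).card

def IsGoodSystem [DecidableEq V] (G : SimpleGraph V) (S : Finset (Finset V)) : Prop :=
  (∀ C ∈ S, (G.induce (C : Set V)).Connected) ∧
    ∀ s t : V, s ≠ t → ∃ u, G.Adj s u ∧ catDist S u t < catDist S s t

def memdim [DecidableEq V] [Fintype V] (S : Finset (Finset V)) : ℕ :=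
  univ.sup fun v : V => (S.filter fun C => v ∈ C).card

noncomputable def graphDiam [Fintype V] (G : SimpleGraph V) : ℕ :=
  univ.sup fun p : V × V => G.dist p.1 p.2

noncomputable def minMemdim (V : Type*) [DecidableEq V] [Fintype V] (G : SimpleGraph V) : ℕ :=
  sInf {m | ∃ S : Finset (Finset V), IsGoodSystem G S ∧ memdim S = m}

def hypercube (m : ℕ) : SimpleGraph (Fin m → Bool) where
  Adj x y := hammingDist x y = 1
  symm := ⟨fun x y (h : hammingDist x y = 1) => show hammingDist y x = 1 by rwa [hammingDist_comm]⟩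
  loopless := ⟨fun x (h : hammingDist x x = 1) => by simp [hammingDist_self] at h⟩

/-!
A good system lets one walk from `s` to `t` along edges that each lower `catDist S · t` by
at least one, so `dist s t ≤ catDist S s t ≤ memdim S`: the diameter bounds the membership
dimension from below. In `Q_m` antipodal vertices are at distance `m`, since each edge changes
one coordinate. Conversely, the `2m` half-cubes `{x | x i = b}` (the product of the good
system `{{0}, {1}}` of `K_2` over the `m` coordinates) form a good system in which every vertex
lies in exactly `m` categories.
-/

open Function

namespace SimpleGraph

theorem exists_walk_length_le_of_forall_exists_adj_lt (G : SimpleGraph V) (d : V → V → ℕ)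
    (hd : ∀ s t, s ≠ t → ∃ u, G.Adj s u ∧ d u t < d s t) (s t : V) :
    ∃ p : G.Walk s t, p.length ≤ d s t := by
  induction hn : d s t using Nat.strong_induction_on generalizing s with
  | _ n ih =>
    by_cases hst : s = t
    · subst hst
      exact ⟨.nil, Nat.zero_le _⟩
    obtain ⟨u, hsu, hut⟩ := hd s t hst
    obtain ⟨p, hp⟩ := ih _ (hn ▸ hut) u rfl
    exact ⟨.cons hsu p, by rw [Walk.length_cons]; omega⟩

theorem preconnected_of_forall_exists_adj_lt (G : SimpleGraph V) (d : V → V → ℕ)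
    (hd : ∀ s t, s ≠ t → ∃ u, G.Adj s u ∧ d u t < d s t) : G.Preconnected := fun s t =>
  (G.exists_walk_length_le_of_forall_exists_adj_lt d hd s t).elim fun p _ => p.reachable

section GoodSystem

variable [DecidableEq V] {G : SimpleGraph V} {S : Finset (Finset V)}

theorem IsGoodSystem.dist_le_catDist (hS : IsGoodSystem G S) (s t : V) :
    G.dist s t ≤ catDist S s t :=
  (G.exists_walk_length_le_of_forall_exists_adj_lt _ hS.2 s t).elim fun p hp =>
    (dist_le p).trans hp

theorem catDist_le_memdim [Fintype V] (S : Finset (Finset V)) (s t : V) :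
    catDist S s t ≤ memdim S :=
  (card_le_card fun _ hC => by
      simp only [mem_filter] at hC ⊢
      exact ⟨hC.1, hC.2.1⟩).trans
    (le_sup (f := fun v => (S.filter fun C => v ∈ C).card) (mem_univ t))

theorem IsGoodSystem.graphDiam_le_memdim [Fintype V] (hS : IsGoodSystem G S) :
    graphDiam G ≤ memdim S :=
  Finset.sup_le fun p _ => (hS.dist_le_catDist p.1 p.2).trans (catDist_le_memdim S p.1 p.2)

theorem minMemdim_le [Fintype V] (hS : IsGoodSystem G S) : minMemdim V G ≤ memdim S :=
  Nat.sInf_le ⟨S, hS, rfl⟩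

theorem graphDiam_le_minMemdim [Fintype V] (h : ∃ S, IsGoodSystem G S) :
    graphDiam G ≤ minMemdim V G := by
  obtain ⟨S, hS⟩ := h
  refine le_csInf ⟨_, S, hS, rfl⟩ ?_
  rintro k ⟨T, hT, rfl⟩
  exact hT.graphDiam_le_memdim

end GoodSystem

end SimpleGraph

namespace hypercube

variable {m : ℕ}

theorem adj_update {x : Fin m → Bool} {j : Fin m} {b : Bool} (h : x j ≠ b) :
    (hypercube m).Adj x (update x j b) := by
  change hammingDist x (update x j b) = 1
  rw [hammingDist, Finset.card_eq_one]
  refine ⟨j, Finset.ext fun i => ?_⟩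
  rcases eq_or_ne i j with rfl | hij
  · simp [h]
  · simp [hij]

theorem hammingDist_update_lt {x y : Fin m → Bool} {j : Fin m} (h : x j ≠ y j) :
    hammingDist (update x j (y j)) y < hammingDist x y := by
  refine card_lt_card ((ssubset_iff_of_subset fun i => ?_).2 ⟨j, by simp [h], by simp⟩)
  rcases eq_or_ne i j with rfl | hij
  · simp
  · simp [hij]

theorem hammingDist_le_length {x y : Fin m → Bool} (p : (hypercube m).Walk x y) :
    hammingDist x y ≤ p.length := by
  induction p with
  | nil => simp
  | @cons x z y hxz p ih =>
    have hxz : hammingDist x z = 1 := hxz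
    have := hammingDist_triangle x z y
    rw [Walk.length_cons]
    omega

theorem connected : (hypercube m).Connected where
  preconnected := (hypercube m).preconnected_of_forall_exists_adj_lt hammingDist fun x y hxy => by
    obtain ⟨j, hj⟩ := Function.ne_iff.1 hxy
    exact ⟨_, adj_update hj, hammingDist_update_lt hj⟩

theorem le_graphDiam : m ≤ graphDiam (hypercube m) := by
  obtain ⟨p, hp⟩ := (connected.preconnected (fun _ => false) fun _ => true).exists_walk_length_eq_dist
  calc m = hammingDist (fun _ : Fin m => false) fun _ => true := by simp [hammingDist]
    _ ≤ (hypercube m).dist (fun _ => false) fun _ => true := hp ▸ hammingDist_le_length p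
    _ ≤ graphDiam (hypercube m) :=
        le_sup (f := fun p : (Fin m → Bool) × (Fin m → Bool) => (hypercube m).dist p.1 p.2)
          (mem_univ ((fun _ => false), fun _ => true))

def halfCube (i : Fin m) (b : Bool) : Finset (Fin m → Bool) :=
  univ.filter fun x => x i = b

@[simp]
theorem mem_halfCube {i : Fin m} {b : Bool} {x : Fin m → Bool} : x ∈ halfCube i b ↔ x i = b := by
  simp [halfCube]

def halfCubes (m : ℕ) : Finset (Finset (Fin m → Bool)) :=
  univ.image fun p : Fin m × Bool => halfCube p.1 p.2

theorem mem_halfCubes {C : Finset (Fin m → Bool)} : C ∈ halfCubes m ↔ ∃ i b, halfCube i b = C := by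
  simp [halfCubes]

theorem induce_halfCube_connected (i : Fin m) (b : Bool) :
    ((hypercube m).induce (halfCube i b : Set (Fin m → Bool))).Connected := by
  have : Nonempty (halfCube i b : Set (Fin m → Bool)) := ⟨⟨fun _ => b, by simp⟩⟩
  refine ⟨preconnected_of_forall_exists_adj_lt _ (fun x y => hammingDist x.1 y.1) ?_⟩
  rintro ⟨x, hx⟩ ⟨y, hy⟩ hxy
  obtain ⟨j, hj⟩ := Function.ne_iff.1 fun h => hxy (Subtype.ext h)
  rw [mem_coe, mem_halfCube] at hx hy
  have hji : j ≠ i := by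
    rintro rfl
    exact hj (hx.trans hy.symm)
  exact ⟨⟨update x j (y j), by simpa [update_of_ne hji.symm]⟩, adj_update hj,
    hammingDist_update_lt hj⟩

theorem catDist_halfCubes_update_lt {x y : Fin m → Bool} {j : Fin m} (h : x j ≠ y j) :
    catDist (halfCubes m) (update x j (y j)) y < catDist (halfCubes m) x y := by
  refine card_lt_card ((ssubset_iff_of_subset ?_).2 ⟨halfCube j (y j), ?_, ?_⟩)
  · intro C hC
    simp only [mem_filter, mem_halfCubes] at hC ⊢
    obtain ⟨⟨i, b, rfl⟩, hy, hx'⟩ := hC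
    refine ⟨⟨i, b, rfl⟩, hy, ?_⟩
    rcases eq_or_ne i j with rfl | hij
    · simp_all
    · simpa [update_of_ne hij] using hx'
  · simpa [h] using mem_halfCubes.2 ⟨j, y j, rfl⟩
  · simp

theorem isGoodSystem_halfCubes : IsGoodSystem (hypercube m) (halfCubes m) := by
  refine ⟨fun C hC => ?_, fun x y hxy => ?_⟩
  · obtain ⟨i, b, rfl⟩ := mem_halfCubes.1 hC
    exact induce_halfCube_connected i b
  · obtain ⟨j, hj⟩ := Function.ne_iff.1 hxy
    exact ⟨_, adj_update hj, catDist_halfCubes_update_lt hj⟩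

theorem memdim_halfCubes_le : memdim (halfCubes m) ≤ m := by
  refine Finset.sup_le fun x _ => ?_
  calc ((halfCubes m).filter fun C => x ∈ C).card
      ≤ (univ.image fun i => halfCube i (x i)).card := by
        refine card_le_card fun C hC => ?_
        simp only [mem_filter, mem_halfCubes] at hC
        obtain ⟨⟨i, b, rfl⟩, hx⟩ := hC
        exact mem_image.2 ⟨i, mem_univ i, by rw [mem_halfCube.1 hx]⟩
    _ ≤ m := card_image_le.trans (by simp)

end hypercube

open hypercube in
theorem stmt5 (m : ℕ) : minMemdim (Fin m → Bool) (hypercube m) = m :=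
  le_antisymm ((minMemdim_le isGoodSystem_halfCubes).trans memdim_halfCubes_le)
    (le_graphDiam.trans (graphDiam_le_minMemdim ⟨_, isGoodSystem_halfCubes⟩))
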